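/- Let M_x, M_y be positive integers and Δx, Δy > 0. For every grid function v = (v_{ij}), 0 ≤ i ≤ M_x+1, 0 ≤ j ≤ M_y+1, with v_{ij} = 0 for all (i,j) ∈ ∂Λ, one has (3/16)‖v‖² ≤ (θ_x v, v) ≤ ‖v‖² and (3/16)‖v‖² ≤ (θ_y v, v) ≤ ‖v‖². -/
import Mathlib


/-- The averaging operator `θ_x` acting on two-dimensional grid functions
(indices `0 ≤ i ≤ Mx+1`): `(θ_x v)_{0,j} = (4v_{0,j}+4v_{1,j})/8`,
`(θ_x v)_{i,j} = (v_{i-1,j}+6v_{i,j}+v_{i+1,j})/8` for `1 ≤ i ≤ Mx`,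
`(θ_x v)_{Mx+1,j} = (4v_{Mx,j}+4v_{Mx+1,j})/8`. -/
noncomputable def thetaX (Mx : ℕ) (v : ℕ → ℕ → ℝ) : ℕ → ℕ → ℝ := fun i j =>
  if i = 0 then (4 * v 0 j + 4 * v 1 j) / 8
  else if i = Mx + 1 then (4 * v Mx j + 4 * v (Mx + 1) j) / 8
  else (v (i - 1) j + 6 * v i j + v (i + 1) j) / 8

/-- The averaging operator `θ_y`, acting on the second index. -/
noncomputable def thetaY (My : ℕ) (v : ℕ → ℕ → ℝ) : ℕ → ℕ → ℝ := fun i j =>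
  if j = 0 then (4 * v i 0 + 4 * v i 1) / 8
  else if j = My + 1 then (4 * v i My + 4 * v i (My + 1)) / 8
  else (v i (j - 1) + 6 * v i j + v i (j + 1)) / 8

/-- Discrete inner product `(u,v) = Δx Δy Σ_{i=0}^{Mx+1} Σ_{j=0}^{My+1} u_{ij} v_{ij}`. -/
noncomputable def gridInner (Mx My : ℕ) (dx dy : ℝ) (u v : ℕ → ℕ → ℝ) : ℝ :=
  dx * dy * ∑ i ∈ Finset.range (Mx + 2), ∑ j ∈ Finset.range (My + 2), u i j * v i j



lemma oneD (M : ℕ) (w : ℕ → ℝ) (h0 : w 0 = 0) (h1 : w (M + 1) = 0) :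
    (3 / 16) * (∑ i ∈ Finset.range (M + 2), w i * w i) ≤
      (∑ i ∈ Finset.range (M + 2),
        (if i = 0 then (4 * w 0 + 4 * w 1) / 8
         else if i = M + 1 then (4 * w M + 4 * w (M + 1)) / 8
         else (w (i - 1) + 6 * w i + w (i + 1)) / 8) * w i) ∧
    (∑ i ∈ Finset.range (M + 2),
        (if i = 0 then (4 * w 0 + 4 * w 1) / 8
         else if i = M + 1 then (4 * w M + 4 * w (M + 1)) / 8
         else (w (i - 1) + 6 * w i + w (i + 1)) / 8) * w i) ≤
      ∑ i ∈ Finset.range (M + 2), w i * w i := by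
  set A := ∑ i ∈ Finset.range (M + 2), w i * w i with hA
  set C := ∑ i ∈ Finset.range (M + 1), w i * w (i + 1) with hC
  set S := ∑ i ∈ Finset.range (M + 2),
        (if i = 0 then (4 * w 0 + 4 * w 1) / 8
         else if i = M + 1 then (4 * w M + 4 * w (M + 1)) / 8
         else (w (i - 1) + 6 * w i + w (i + 1)) / 8) * w i with hSdef
  have hlast := Finset.sum_range_succ (fun i => w i * w i) (M + 1)
  have hfirst := Finset.sum_range_succ' (fun i => w i * w i) M
  have hA1 : A = ∑ i ∈ Finset.range M, w (i + 1) * w (i + 1) := by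
    rw [hA, hlast, hfirst, h0, h1]; ring
  have hAa : ∑ i ∈ Finset.range (M + 1), w i * w i = A := by
    rw [hA, hlast, h1]; ring
  have hAb : ∑ i ∈ Finset.range (M + 1), w (i + 1) * w (i + 1) = A := by
    have h2 := Finset.sum_range_succ' (fun i => w i * w i) (M + 1)
    rw [hA, h2, h0]; ring
  have hC1 : C = ∑ i ∈ Finset.range M, w i * w (i + 1) := by
    rw [hC, Finset.sum_range_succ (fun i => w i * w (i + 1)) M, h1]; ring
  have hC2 : C = ∑ i ∈ Finset.range M, w (i + 1) * w (i + 1 + 1) := by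
    rw [hC, Finset.sum_range_succ' (fun i => w i * w (i + 1)) M, h0]; ring
  have hmid : ∑ i ∈ Finset.range M,
      (if i + 1 = 0 then (4 * w 0 + 4 * w 1) / 8
       else if i + 1 = M + 1 then (4 * w M + 4 * w (M + 1)) / 8
       else (w (i + 1 - 1) + 6 * w (i + 1) + w (i + 1 + 1)) / 8) * w (i + 1)
      = ∑ i ∈ Finset.range M,
        (w i * w (i + 1) + 6 * (w (i + 1) * w (i + 1)) + w (i + 1) * w (i + 1 + 1)) / 8 :=
    Finset.sum_congr rfl fun i hi => by
      rw [Finset.mem_range] at hi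
      rw [if_neg (Nat.succ_ne_zero i), if_neg (by omega : ¬ i + 1 = M + 1),
        Nat.add_sub_cancel]
      ring
  have hS : S = (6 * A + 2 * C) / 8 := by
    rw [hSdef, Finset.sum_range_succ, Finset.sum_range_succ' _ M, hmid, h0, h1]
    have hsplit : ∑ i ∈ Finset.range M,
        (w i * w (i + 1) + 6 * (w (i + 1) * w (i + 1)) + w (i + 1) * w (i + 1 + 1)) / 8
        = ((∑ i ∈ Finset.range M, w i * w (i + 1))
          + 6 * (∑ i ∈ Finset.range M, w (i + 1) * w (i + 1))
          + (∑ i ∈ Finset.range M, w (i + 1) * w (i + 1 + 1))) / 8 := by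
      rw [← Finset.sum_div, Finset.sum_add_distrib, Finset.sum_add_distrib, Finset.mul_sum]
    rw [hsplit, ← hC1, ← hC2, ← hA1]
    ring
  have hD : ∑ i ∈ Finset.range (M + 1), (w i - w (i + 1)) ^ 2 = 2 * A - 2 * C := by
    have he : ∀ i ∈ Finset.range (M + 1), (w i - w (i + 1)) ^ 2
        = w i * w i + w (i + 1) * w (i + 1) - 2 * (w i * w (i + 1)) := fun i _ => by ring
    rw [Finset.sum_congr rfl he, Finset.sum_sub_distrib, Finset.sum_add_distrib,
      hAa, hAb, ← Finset.mul_sum, ← hC]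
    ring
  have hP : ∑ i ∈ Finset.range (M + 1), (w i + w (i + 1)) ^ 2 = 2 * A + 2 * C := by
    have he : ∀ i ∈ Finset.range (M + 1), (w i + w (i + 1)) ^ 2
        = w i * w i + w (i + 1) * w (i + 1) + 2 * (w i * w (i + 1)) := fun i _ => by ring
    rw [Finset.sum_congr rfl he, Finset.sum_add_distrib, Finset.sum_add_distrib,
      hAa, hAb, ← Finset.mul_sum, ← hC]
    ring
  have hD0 : (0:ℝ) ≤ 2 * A - 2 * C := by
    rw [← hD]; exact Finset.sum_nonneg fun i _ => sq_nonneg _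
  have hP0 : (0:ℝ) ≤ 2 * A + 2 * C := by
    rw [← hP]; exact Finset.sum_nonneg fun i _ => sq_nonneg _
  have hA0 : (0:ℝ) ≤ A := Finset.sum_nonneg fun i _ => mul_self_nonneg _
  constructor <;> (rw [hS]; linarith)

theorem stmt7 (Mx My : ℕ) (hMx : 0 < Mx) (hMy : 0 < My)
    (dx dy : ℝ) (hdx : 0 < dx) (hdy : 0 < dy)
    (v : ℕ → ℕ → ℝ)
    (hbc : ∀ i ≤ Mx + 1, ∀ j ≤ My + 1,
      (i = 0 ∨ i = Mx + 1 ∨ j = 0 ∨ j = My + 1) → v i j = 0) :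
    (3 / 16) * gridInner Mx My dx dy v v ≤ gridInner Mx My dx dy (thetaX Mx v) v ∧
    gridInner Mx My dx dy (thetaX Mx v) v ≤ gridInner Mx My dx dy v v ∧
    (3 / 16) * gridInner Mx My dx dy v v ≤ gridInner Mx My dx dy (thetaY My v) v ∧
    gridInner Mx My dx dy (thetaY My v) v ≤ gridInner Mx My dx dy v v := by
  have hdxy : (0:ℝ) ≤ dx * dy := le_of_lt (mul_pos hdx hdy)
  -- per-column bounds for thetaX
  have hx : ∀ j ∈ Finset.range (My + 2),
      (3 / 16) * (∑ i ∈ Finset.range (Mx + 2), v i j * v i j)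
        ≤ (∑ i ∈ Finset.range (Mx + 2), thetaX Mx v i j * v i j) ∧
      (∑ i ∈ Finset.range (Mx + 2), thetaX Mx v i j * v i j)
        ≤ ∑ i ∈ Finset.range (Mx + 2), v i j * v i j := by
    intro j hj
    rw [Finset.mem_range] at hj
    have hj' : j ≤ My + 1 := by omega
    have h0 : v 0 j = 0 := hbc 0 (by omega) j hj' (Or.inl rfl)
    have h1 : v (Mx + 1) j = 0 := hbc (Mx + 1) le_rfl j hj' (Or.inr (Or.inl rfl))
    have := oneD Mx (fun i => v i j) h0 h1
    simpa [thetaX] using this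
  -- per-row bounds for thetaY
  have hy : ∀ i ∈ Finset.range (Mx + 2),
      (3 / 16) * (∑ j ∈ Finset.range (My + 2), v i j * v i j)
        ≤ (∑ j ∈ Finset.range (My + 2), thetaY My v i j * v i j) ∧
      (∑ j ∈ Finset.range (My + 2), thetaY My v i j * v i j)
        ≤ ∑ j ∈ Finset.range (My + 2), v i j * v i j := by
    intro i hi
    rw [Finset.mem_range] at hi
    have hi' : i ≤ Mx + 1 := by omega
    have h0 : v i 0 = 0 := hbc i hi' 0 (by omega) (Or.inr (Or.inr (Or.inl rfl)))
    have h1 : v i (My + 1) = 0 :=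
      hbc i hi' (My + 1) le_rfl (Or.inr (Or.inr (Or.inr rfl)))
    have := oneD My (fun j => v i j) h0 h1
    simpa [thetaY] using this
  have hcommθ : ∑ i ∈ Finset.range (Mx + 2), ∑ j ∈ Finset.range (My + 2),
      thetaX Mx v i j * v i j
      = ∑ j ∈ Finset.range (My + 2), ∑ i ∈ Finset.range (Mx + 2),
        thetaX Mx v i j * v i j := Finset.sum_comm
  have hcommv : ∑ i ∈ Finset.range (Mx + 2), ∑ j ∈ Finset.range (My + 2), v i j * v i j
      = ∑ j ∈ Finset.range (My + 2), ∑ i ∈ Finset.range (Mx + 2), v i j * v i j :=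
    Finset.sum_comm
  have hx1 : (3 / 16) * ∑ j ∈ Finset.range (My + 2), ∑ i ∈ Finset.range (Mx + 2),
        v i j * v i j
      ≤ ∑ j ∈ Finset.range (My + 2), ∑ i ∈ Finset.range (Mx + 2),
        thetaX Mx v i j * v i j := by
    rw [Finset.mul_sum]
    exact Finset.sum_le_sum fun j hj => (hx j hj).1
  have hx2 : ∑ j ∈ Finset.range (My + 2), ∑ i ∈ Finset.range (Mx + 2),
        thetaX Mx v i j * v i j
      ≤ ∑ j ∈ Finset.range (My + 2), ∑ i ∈ Finset.range (Mx + 2), v i j * v i j :=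
    Finset.sum_le_sum fun j hj => (hx j hj).2
  have hy1 : (3 / 16) * ∑ i ∈ Finset.range (Mx + 2), ∑ j ∈ Finset.range (My + 2),
        v i j * v i j
      ≤ ∑ i ∈ Finset.range (Mx + 2), ∑ j ∈ Finset.range (My + 2),
        thetaY My v i j * v i j := by
    rw [Finset.mul_sum]
    exact Finset.sum_le_sum fun i hi => (hy i hi).1
  have hy2 : ∑ i ∈ Finset.range (Mx + 2), ∑ j ∈ Finset.range (My + 2),
        thetaY My v i j * v i j
      ≤ ∑ i ∈ Finset.range (Mx + 2), ∑ j ∈ Finset.range (My + 2), v i j * v i j :=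
    Finset.sum_le_sum fun i hi => (hy i hi).2
  unfold gridInner
  rw [hcommθ, hcommv]
  refine ⟨?_, ?_, ?_, ?_⟩
  · calc (3/16) * (dx * dy * ∑ j ∈ Finset.range (My + 2), ∑ i ∈ Finset.range (Mx + 2), v i j * v i j)
        = dx * dy * ((3/16) * ∑ j ∈ Finset.range (My + 2), ∑ i ∈ Finset.range (Mx + 2), v i j * v i j) := by ring
      _ ≤ _ := mul_le_mul_of_nonneg_left hx1 hdxy
  · exact mul_le_mul_of_nonneg_left hx2 hdxy
  · calc (3/16) * (dx * dy * ∑ j ∈ Finset.range (My + 2), ∑ i ∈ Finset.range (Mx + 2), v i j * v i j)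
        = dx * dy * ((3/16) * ∑ i ∈ Finset.range (Mx + 2), ∑ j ∈ Finset.range (My + 2), v i j * v i j) := by rw [← hcommv]; ring
      _ ≤ _ := mul_le_mul_of_nonneg_left hy1 hdxy
  · rw [← hcommv]
    exact mul_le_mul_of_nonneg_left hy2 hdxy
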